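/- Let A be a commutative ring and E an A-module. The trivial extension (idealization) A ⋉ E is locally stable if and only if A is locally stable. -/

import Mathlib

/-- A commutative ring has stable range 1. -/
def HasStableRange1 (R : Type*) [CommRing R] : Prop :=
  ∀ a b : R, Ideal.span {a} ⊔ Ideal.span {b} = ⊤ → ∃ y : R, IsUnit (a + b * y)

/-- An element `a` is stable if `R/aR` has stable range 1. -/
def IsStableElem {R : Type*} [CommRing R] (a : R) : Prop :=
  HasStableRange1 (R ⧸ Ideal.span {a})

/-- A commutative ring is locally stable. -/
def LocallyStable (R : Type*) [CommRing R] : Prop :=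
  ∀ a b : R, Ideal.span {a} ⊔ Ideal.span {b} = ⊤ →
    ∃ y : R, HasStableRange1 (R ⧸ Ideal.span {a + b * y})

/-- A clean ring: every element is the sum of an idempotent and a unit. -/
def IsCleanRing (R : Type*) [CommRing R] : Prop :=
  ∀ a : R, ∃ e u : R, IsIdempotentElem e ∧ IsUnit u ∧ a = e + u

/-- A ring has neat range 1. -/
def NeatRange1 (R : Type*) [CommRing R] : Prop :=
  ∀ a b : R, Ideal.span {a} ⊔ Ideal.span {b} = ⊤ →
    ∃ y : R, IsCleanRing (R ⧸ Ideal.span {a + b * y})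

/-- A ring has almost stable range 1: every proper homomorphic image has stable range 1. -/
def AlmostStableRange1 (R : Type*) [CommRing R] : Prop :=
  ∀ I : Ideal R, I ≠ ⊥ → HasStableRange1 (R ⧸ I)

/-- An elementary divisor ring: every rectangular matrix admits diagonal reduction. -/
def ElementaryDivisorRing (R : Type*) [CommRing R] : Prop :=
  ∀ (m n : ℕ) (A : Matrix (Fin m) (Fin n) R),
    ∃ (P : Matrix (Fin m) (Fin m) R) (Q : Matrix (Fin n) (Fin n) R),
      IsUnit P ∧ IsUnit Q ∧
      (∀ (i : Fin m) (j : Fin n), (i : ℕ) ≠ (j : ℕ) → (P * A * Q) i j = 0) ∧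
      (∀ (i i' : Fin m) (j j' : Fin n), (i : ℕ) = (j : ℕ) → (i' : ℕ) = (j' : ℕ) →
        (i' : ℕ) = (i : ℕ) + 1 → (P * A * Q) i j ∣ (P * A * Q) i' j')

/-- A ring is strongly completable. -/
def StronglyCompletable (R : Type*) [CommRing R] : Prop :=
  ∀ (n : ℕ) (hn : 0 < n) (a : Fin n → R) (d : R),
    (⨆ i, Ideal.span {a i}) = Ideal.span {d} →
    ∃ A : Matrix (Fin n) (Fin n) R, (∀ j, A ⟨0, hn⟩ j = a j) ∧ A.det = d

/-!
The first projection `A ⋉ E → A` is surjective with kernel `0 ⋉ E` inside the Jacobson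
radical, and local stability transfers both ways along any such map `f : R → S`: coprime pairs
lift, units are reflected, and for each `r` the induced map `R/(r) → S/(f r)` is again of the
same kind. Stable range 1 descends along surjections and ascends along surjections that
reflect units.
-/

open Function

section

variable {R S : Type*} [CommRing R] [CommRing S]

theorem span_singleton_sup_span_singleton_eq_top_iff {a b : R} :
    Ideal.span {a} ⊔ Ideal.span {b} = ⊤ ↔ IsCoprime a b := by
  rw [← Ideal.isCoprime_iff_sup_eq, Ideal.isCoprime_span_singleton_iff]

theorem hasStableRange1_iff :
    HasStableRange1 R ↔ ∀ a b : R, IsCoprime a b → ∃ y, IsUnit (a + b * y) := by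
  simp only [HasStableRange1, span_singleton_sup_span_singleton_eq_top_iff]

theorem isLocalHom_of_surjective_of_ker_le_jacobson {f : R →+* S} (hf : Surjective f)
    (hk : RingHom.ker f ≤ Ideal.jacobson ⊥) : IsLocalHom f where
  map_nonunit x hx := by
    obtain ⟨y', hy'⟩ := hx.exists_right_inv
    obtain ⟨y, rfl⟩ := hf y'
    have hxy : x * y - 1 ∈ RingHom.ker f := by simp [RingHom.mem_ker, hy']
    exact isUnit_of_mul_isUnit_left (by simpa using Ideal.mem_jacobson_bot.mp (hk hxy) 1)

theorem IsCoprime.of_map {f : R →+* S} [IsLocalHom f] (hf : Surjective f) {a b : R}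
    (h : IsCoprime (f a) (f b)) : IsCoprime a b := by
  obtain ⟨u, v, huv⟩ := h
  obtain ⟨u, rfl⟩ := hf u
  obtain ⟨v, rfl⟩ := hf v
  have hunit : IsUnit (u * a + v * b) := isUnit_of_map_unit f _ (by simp [huv])
  obtain ⟨w, hw⟩ := hunit.exists_right_inv
  exact ⟨w * u, w * v, by linear_combination hw⟩

theorem HasStableRange1.of_surjective {f : R →+* S} (hf : Surjective f)
    (h : HasStableRange1 R) : HasStableRange1 S := by
  rw [hasStableRange1_iff] at h ⊢
  rintro a b ⟨u, v, huv⟩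
  obtain ⟨a, rfl⟩ := hf a
  obtain ⟨u, rfl⟩ := hf u
  -- the lift of `b` need not be coprime to `a`, but `1 - u a` is, and it maps to `v b`
  obtain ⟨y, hy⟩ := h a (1 - u * a) ⟨u, 1, by ring⟩
  refine ⟨v * f y, ?_⟩
  have hc : f (1 - u * a) = v * b := by
    simp only [map_sub, map_one, map_mul]
    linear_combination -huv
  have hunit := hy.map f
  rw [map_add, map_mul, hc] at hunit
  convert hunit using 1
  ring

theorem HasStableRange1.of_surjective_of_isLocalHom {f : R →+* S} [IsLocalHom f]
    (hf : Surjective f) (h : HasStableRange1 S) : HasStableRange1 R := by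
  rw [hasStableRange1_iff] at h ⊢
  intro a b hab
  obtain ⟨y', hy⟩ := h (f a) (f b) (hab.map f)
  obtain ⟨y, rfl⟩ := hf y'
  exact ⟨y, isUnit_of_map_unit f _ (by simpa using hy)⟩

theorem ker_quotientMap_map_le_jacobson {f : R →+* S} (hf : Surjective f)
    (hk : RingHom.ker f ≤ Ideal.jacobson ⊥) (I : Ideal R) :
    RingHom.ker (Ideal.quotientMap (I.map f) f I.le_comap_map) ≤ Ideal.jacobson ⊥ := by
  intro s hs
  obtain ⟨s, rfl⟩ := Ideal.Quotient.mk_surjective s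
  rw [RingHom.mem_ker, Ideal.quotientMap_mk, Ideal.Quotient.eq_zero_iff_mem,
    Ideal.mem_map_iff_of_surjective f hf] at hs
  obtain ⟨x, hx, hfx⟩ := hs
  have hsx : s - x ∈ RingHom.ker f := by simp [RingHom.mem_ker, hfx]
  refine Ideal.mem_jacobson_bot.mpr fun t ↦ ?_
  obtain ⟨t, rfl⟩ := Ideal.Quotient.mk_surjective t
  simpa [Ideal.Quotient.eq_zero_iff_mem.mpr hx] using
    (Ideal.mem_jacobson_bot.mp (hk hsx) t).map (Ideal.Quotient.mk I)

theorem hasStableRange1_quotient_map_iff {f : R →+* S} (hf : Surjective f)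
    (hk : RingHom.ker f ≤ Ideal.jacobson ⊥) (I : Ideal R) :
    HasStableRange1 (S ⧸ I.map f) ↔ HasStableRange1 (R ⧸ I) := by
  have hg := Ideal.quotientMap_surjective (H := I.le_comap_map) hf
  have := isLocalHom_of_surjective_of_ker_le_jacobson hg (ker_quotientMap_map_le_jacobson hf hk I)
  exact ⟨.of_surjective_of_isLocalHom hg, .of_surjective hg⟩

theorem locallyStable_iff_of_surjective_of_ker_le_jacobson {f : R →+* S} (hf : Surjective f)
    (hk : RingHom.ker f ≤ Ideal.jacobson ⊥) : LocallyStable R ↔ LocallyStable S := by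
  have := isLocalHom_of_surjective_of_ker_le_jacobson hf hk
  have key (r : R) :
      HasStableRange1 (S ⧸ Ideal.span {f r}) ↔ HasStableRange1 (R ⧸ Ideal.span {r}) := by
    rw [← Set.image_singleton, ← Ideal.map_span]
    exact hasStableRange1_quotient_map_iff hf hk _
  simp only [LocallyStable, span_singleton_sup_span_singleton_eq_top_iff]
  constructor
  · intro h a b hab
    obtain ⟨a, rfl⟩ := hf a
    obtain ⟨b, rfl⟩ := hf b
    obtain ⟨y, hy⟩ := h a b (hab.of_map hf)
    refine ⟨f y, ?_⟩
    rw [← map_mul, ← map_add]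
    exact (key _).mpr hy
  · intro h a b hab
    obtain ⟨y', hy⟩ := h (f a) (f b) (hab.map f)
    obtain ⟨y, rfl⟩ := hf y'
    rw [← map_mul, ← map_add] at hy
    exact ⟨y, (key _).mp hy⟩

end

theorem TrivSqZeroExt.ker_fstHom_le_jacobson (R M : Type*) [CommRing R] [AddCommGroup M]
    [Module R M] [Module Rᵐᵒᵖ M] [IsCentralScalar R M] :
    RingHom.ker (fstHom R R M).toRingHom ≤ Ideal.jacobson ⊥ := by
  intro x (hx : x.fst = 0)
  refine Ideal.mem_jacobson_bot.mpr fun y ↦ isUnit_iff_isUnit_fst.mpr ?_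
  simp [hx]

theorem stmt13 (A : Type*) (E : Type*) [CommRing A] [AddCommGroup E] [Module A E] [Module Aᵐᵒᵖ E] [IsCentralScalar A E] :
    LocallyStable (TrivSqZeroExt A E) ↔ LocallyStable A :=
  locallyStable_iff_of_surjective_of_ker_le_jacobson
    (fun a ↦ ⟨TrivSqZeroExt.inl a, TrivSqZeroExt.fst_inl E a⟩)
    (TrivSqZeroExt.ker_fstHom_le_jacobson A E)
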